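/- arXiv:1708.08116 — 2 statements merged into one kernel-verified Lean document; each statement's English description precedes it below -/
import Mathlib

section
/- Let k be a positive integer and suppose sup_{ω∈ℝ} Σ_{ℓ∈ℤ} |ω+2πℓ|^{2k} |φ̂(ω+2πℓ)|² < ∞. Then for every f ∈ W whose k-th (weak) derivative f^{(k)} lies in L²(ℝ), one has ‖f^{(k)}‖₂² ≤ ( sup_{ω∈ℝ} Σ_{ℓ∈ℤ} |ω+2πℓ|^{2k} |φ̂(ω+2πℓ)|² ) · ‖f‖₂². -/
/-!
Periodize the Fourier side: since `m` is `2π`-periodic, cutting `ℝ` into the translates of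
`(0, 2π]` turns `∫_ℝ |ω|^{2k} |m(ω) φ̂(ω)|² dω` into
`∫_0^{2π} |m(x)|² ∑_ℓ |x + 2πℓ|^{2k} |φ̂(x + 2πℓ)|² dx`, which is at most the supremum of
the inner sum times `∫_0^{2π} |m|²`, while the same computation with the weight `1` and the
orthonormality relation `∑_ℓ |φ̂(x + 2πℓ)|² = 1` shows `∫_ℝ |m φ̂|² = ∫_0^{2π} |m|²`.
-/

open MeasureTheory Real ENNReal

theorem tsum_zmultiples_eq_tsum_int {α : Type*} [AddCommMonoid α] [TopologicalSpace α] {T : ℝ}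
    (hT : 0 < T) (f : ℝ → α) :
    ∑' g : AddSubgroup.zmultiples T, f g = ∑' n : ℤ, f (n * T) := by
  have h := tsum_range f (zsmul_left_strictMono hT).injective
  simp only [zsmul_eq_mul] at h
  rw [← h]
  exact tsum_congr_set_coe f (by simp [AddSubgroup.coe_zmultiples, zsmul_eq_mul])

theorem lintegral_eq_setLIntegral_Ioc_tsum {T : ℝ} (hT : 0 < T) {F : ℝ → ℝ≥0∞}
    (hF : Measurable F) :
    ∫⁻ x, F x = ∫⁻ x in Set.Ioc 0 T, ∑' n : ℤ, F (x + T * n) := by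
  rw [(isAddFundamentalDomain_Ioc hT 0 volume).lintegral_eq_tsum'', zero_add]
  simp_rw [AddSubgroup.vadd_def, vadd_eq_add]
  rw [tsum_zmultiples_eq_tsum_int hT (fun c => ∫⁻ x in Set.Ioc 0 T, F (c + x)),
    ← lintegral_tsum fun n => by fun_prop]
  simp only [mul_comm, add_comm]

theorem lintegral_periodic_mul_eq {T : ℝ} (hT : 0 < T) {q g : ℝ → ℝ≥0∞} (hq : Measurable q)
    (hg : Measurable g) (hqT : Function.Periodic q T) :
    ∫⁻ x, q x * g x = ∫⁻ x in Set.Ioc 0 T, q x * ∑' n : ℤ, g (x + T * n) := by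
  rw [lintegral_eq_setLIntegral_Ioc_tsum hT (F := fun x => q x * g x) (by fun_prop)]
  refine setLIntegral_congr_fun measurableSet_Ioc fun x _ => ?_
  simp only [← ENNReal.tsum_mul_left, mul_comm T, hqT.int_mul _ x]

theorem ENNReal.tsum_ofReal_eq_one {ι : Type*} {f : ι → ℝ} (hf : ∀ i, 0 ≤ f i)
    (h : ∑' i, f i = 1) : ∑' i, ENNReal.ofReal (f i) = 1 := by
  have hsum : Summable f := by
    by_contra hns
    simp [tsum_eq_zero_of_not_summable hns] at h
  rw [← ENNReal.ofReal_tsum_of_nonneg hf hsum, h, ENNReal.ofReal_one]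

theorem ENNReal.ofReal_mul_norm_mul_sq {R : Type*} [NormedDivisionRing R] (w : ℝ) (a b : R) :
    ENNReal.ofReal (w * ‖a * b‖ ^ 2) = ENNReal.ofReal (‖a‖ ^ 2) * ENNReal.ofReal (w * ‖b‖ ^ 2) := by
  rw [← ENNReal.ofReal_mul (by positivity), norm_mul, mul_pow]
  ring_nf

theorem integral_le_toReal_mul_integral_of_lintegral_le {α : Type*} [MeasurableSpace α]
    {μ : Measure α} {a b : α → ℝ} (ha : 0 ≤ᵐ[μ] a) (ha' : AEStronglyMeasurable a μ)
    (hb : 0 ≤ᵐ[μ] b) (hb' : AEStronglyMeasurable b μ) {C : ℝ≥0∞} (hC : C ≠ ⊤)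
    (hb_fin : ∫⁻ x, ENNReal.ofReal (b x) ∂μ ≠ ⊤)
    (h : ∫⁻ x, ENNReal.ofReal (a x) ∂μ ≤ C * ∫⁻ x, ENNReal.ofReal (b x) ∂μ) :
    ∫ x, a x ∂μ ≤ C.toReal * ∫ x, b x ∂μ := by
  rw [integral_eq_lintegral_of_nonneg_ae ha ha', integral_eq_lintegral_of_nonneg_ae hb hb',
    ← ENNReal.toReal_mul]
  exact ENNReal.toReal_mono (ENNReal.mul_ne_top hC hb_fin) h

section ShiftInvariant

variable {T : ℝ} {φ m : ℝ → ℂ}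

theorem lintegral_weighted_sq_norm_periodic_mul_le (hT : 0 < T) (hφ : Measurable φ)
    (hm : Measurable m) (hmT : Function.Periodic m T) {w : ℝ → ℝ} (hw : Measurable w) :
    ∫⁻ ω, ENNReal.ofReal (w ω * ‖m ω * φ ω‖ ^ 2) ≤
      (∫⁻ x in Set.Ioc 0 T, ENNReal.ofReal (‖m x‖ ^ 2)) *
        ⨆ ω, ∑' n : ℤ, ENNReal.ofReal (w (ω + T * n) * ‖φ (ω + T * n)‖ ^ 2) := by
  simp only [ENNReal.ofReal_mul_norm_mul_sq]
  rw [lintegral_periodic_mul_eq hT (q := fun x => ENNReal.ofReal (‖m x‖ ^ 2)) (by fun_prop)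
      (by fun_prop) (hmT.comp fun z => ENNReal.ofReal (‖z‖ ^ 2)),
    ← lintegral_mul_const _ (by fun_prop)]
  gcongr with x
  exact le_iSup (fun ω => ∑' n : ℤ, ENNReal.ofReal (w (ω + T * n) * ‖φ (ω + T * n)‖ ^ 2)) x

theorem lintegral_sq_norm_periodic_mul_eq (hT : 0 < T) (hφ : Measurable φ)
    (hm : Measurable m) (hmT : Function.Periodic m T)
    (horth : ∀ᵐ ω, ∑' n : ℤ, ‖φ (ω + T * n)‖ ^ 2 = 1) :
    ∫⁻ ω, ENNReal.ofReal (‖m ω * φ ω‖ ^ 2) = ∫⁻ x in Set.Ioc 0 T, ENNReal.ofReal (‖m x‖ ^ 2) := by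
  simp only [norm_mul, mul_pow, ENNReal.ofReal_mul (sq_nonneg _)]
  rw [lintegral_periodic_mul_eq hT (q := fun x => ENNReal.ofReal (‖m x‖ ^ 2)) (by fun_prop)
    (by fun_prop) (hmT.comp fun z => ENNReal.ofReal (‖z‖ ^ 2))]
  refine setLIntegral_congr_fun_ae measurableSet_Ioc ?_
  filter_upwards [horth] with x hx _
  rw [ENNReal.tsum_ofReal_eq_one (fun _ => by positivity) hx, mul_one]

end ShiftInvariant

theorem bernstein_inequality_shift_invariant_general
    (φhat : ℝ → ℂ) (hφmeas : Measurable φhat)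
    (horth : ∀ᵐ ω : ℝ, ∑' ℓ : ℤ, ‖φhat (ω + 2 * π * ℓ)‖ ^ 2 = 1)
    (k : ℕ)
    (hfin : (⨆ ω : ℝ, ∑' ℓ : ℤ,
        ENNReal.ofReal (|ω + 2 * π * ℓ| ^ (2 * k) * ‖φhat (ω + 2 * π * ℓ)‖ ^ 2)) ≠ ⊤)
    (m : ℝ → ℂ) (hmmeas : Measurable m) (hmper : Function.Periodic m (2 * π))
    (hmL2 : IntegrableOn (fun ω => ‖m ω‖ ^ 2) (Set.Ioc 0 (2 * π)) volume) :
    (1 / (2 * π)) * ∫ ω : ℝ, |ω| ^ (2 * k) * ‖m ω * φhat ω‖ ^ 2 ≤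
      (⨆ ω : ℝ, ∑' ℓ : ℤ,
        ENNReal.ofReal (|ω + 2 * π * ℓ| ^ (2 * k) * ‖φhat (ω + 2 * π * ℓ)‖ ^ 2)).toReal *
      ((1 / (2 * π)) * ∫ ω : ℝ, ‖m ω * φhat ω‖ ^ 2) := by
  have hplain := lintegral_sq_norm_periodic_mul_eq two_pi_pos hφmeas hmmeas hmper horth
  have hweighted := lintegral_weighted_sq_norm_periodic_mul_le two_pi_pos hφmeas hmmeas hmper
    (w := fun ω => |ω| ^ (2 * k)) (by fun_prop)
  have hbound := integral_le_toReal_mul_integral_of_lintegral_le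
    (a := fun ω => |ω| ^ (2 * k) * ‖m ω * φhat ω‖ ^ 2) (b := fun ω => ‖m ω * φhat ω‖ ^ 2)
    (.of_forall fun ω => by positivity) (by fun_prop)
    (.of_forall fun ω => by positivity) (by fun_prop) hfin
    (hplain ▸ hmL2.lintegral_lt_top.ne) (hweighted.trans_eq (by rw [hplain, mul_comm]))
  rw [mul_left_comm]
  exact mul_le_mul_of_nonneg_left hbound (by positivity)

/-- **Bernstein-type inequality in shift-invariant subspaces of `L²(ℝ)`**
(Babenko–Ligun–Spektor, Theorem 1, inequality part).

We work on the Fourier side: `φhat` is the Fourier transform of a function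
`φ ∈ L²(ℝ)` whose integer translates are orthonormal, i.e.
`∑_{ℓ∈ℤ} |φhat(ω+2πℓ)|² = 1` a.e.  A function `f` of the shift-invariant
space `W` generated by the translates of `φ` has Fourier transform
`f̂(ω) = m(ω)·φhat(ω)` with `m` a `2π`-periodic function that is square
integrable over a period.  By Plancherel,
`‖f‖₂² = (1/2π)∫_ℝ ‖f̂(ω)‖² dω` and
`‖f^{(k)}‖₂² = (1/2π)∫_ℝ |ω|^{2k} ‖f̂(ω)‖² dω`.

If `sup_ω ∑_{ℓ∈ℤ} |ω+2πℓ|^{2k} |φhat(ω+2πℓ)|² < ∞`, then for every `f ∈ W`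
with `f^{(k)} ∈ L²(ℝ)` one has
`‖f^{(k)}‖₂² ≤ (sup_ω ∑_{ℓ∈ℤ} |ω+2πℓ|^{2k} |φhat(ω+2πℓ)|²) · ‖f‖₂²`. -/
theorem bernstein_inequality_shift_invariant
    (φhat : ℝ → ℂ) (hφmeas : Measurable φhat)
    (hφL2 : MemLp φhat 2 volume)
    (horth : ∀ᵐ ω : ℝ, ∑' ℓ : ℤ, ‖φhat (ω + 2 * π * ℓ)‖ ^ 2 = 1)
    (k : ℕ) (hk : 0 < k)
    (hfin : (⨆ ω : ℝ, ∑' ℓ : ℤ,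
        ENNReal.ofReal (|ω + 2 * π * ℓ| ^ (2 * k) * ‖φhat (ω + 2 * π * ℓ)‖ ^ 2)) ≠ ⊤)
    (m : ℝ → ℂ) (hmmeas : Measurable m) (hmper : Function.Periodic m (2 * π))
    (hmL2 : IntegrableOn (fun ω => ‖m ω‖ ^ 2) (Set.Ioc 0 (2 * π)) volume)
    -- `f ∈ L²(ℝ)` (on the Fourier side, via Plancherel)
    (hfL2 : MemLp (fun ω => m ω * φhat ω) 2 volume)
    -- `f^{(k)} ∈ L²(ℝ)` (on the Fourier side, via Plancherel)
    (hfkL2 : Integrable (fun ω => |ω| ^ (2 * k) * ‖m ω * φhat ω‖ ^ 2) volume) :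
    (1 / (2 * π)) * ∫ ω : ℝ, |ω| ^ (2 * k) * ‖m ω * φhat ω‖ ^ 2 ≤
      (⨆ ω : ℝ, ∑' ℓ : ℤ,
        ENNReal.ofReal (|ω + 2 * π * ℓ| ^ (2 * k) * ‖φhat (ω + 2 * π * ℓ)‖ ^ 2)).toReal *
      ((1 / (2 * π)) * ∫ ω : ℝ, ‖m ω * φhat ω‖ ^ 2) :=
  bernstein_inequality_shift_invariant_general φhat hφmeas horth k hfin m hmmeas hmper hmL2
end

section
/- Let n ≥ 1, let k = (k₁,…,k_n) be a multi-index of positive integers, and suppose sup_{ω∈ℝⁿ} Σ_{ℓ∈ℤⁿ} ∏_{s=1}^{n} |ω_s+2πℓ_s|^{2k_s} |φ̂(ω+2πℓ)|² < ∞, where ω+2πℓ = (ω₁+2πℓ₁,…,ω_n+2πℓ_n). Then for every f ∈ Wⁿ whose mixed weak derivative ∂^{|k|}f/∂x₁^{k₁}⋯∂x_n^{k_n} lies in L²(ℝⁿ), one has ‖∂^{|k|}f/∂x₁^{k₁}⋯∂x_n^{k_n}‖₂² ≤ ( sup_{ω∈ℝⁿ} Σ_{ℓ∈ℤⁿ}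 ∏_{s=1}^{n} |ω_s+2πℓ_s|^{2k_s} |φ̂(ω+2πℓ)|² ) · ‖f‖₂². -/
/-! Tile `ℝⁿ` by the translates of a fundamental domain `D` of the lattice `2πℤⁿ`. As `|m|²` is
`2π`-periodic, both integrals become integrals over `D` of `|m|²` against the periodizations
`∑_ℓ ∏_s |ω_s + 2πℓ_s|^{2k_s} |φ̂(ω + 2πℓ)|²` and `∑_ℓ |φ̂(ω + 2πℓ)|²`; the first is bounded by
the supremum, the second equals `1` almost everywhere. -/

open MeasureTheory Real
open scoped ENNReal

lemma exists_lintegral_eq_tsum_setLIntegral_shift {ι : Type*} [Fintype ι] {c : ℝ} (hc : c ≠ 0) :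
    ∃ D : Set (ι → ℝ), ∀ f : (ι → ℝ) → ℝ≥0∞,
      ∫⁻ ω, f ω = ∑' ℓ : ι → ℤ, ∫⁻ ω in D, f (fun s => ω s + c * ℓ s) := by
  classical
  let b := (Pi.basisFun ℝ ι).unitsSMul fun _ => Units.mk0 c hc
  let e : (ι → ℤ) ≃ (Submodule.span ℤ (Set.range b)).toAddSubgroup :=
    ((b.restrictScalars ℤ).equivFun).toEquiv.symm
  have he (ℓ : ι → ℤ) : (e ℓ : ι → ℝ) = fun s => c * ℓ s := by
    ext t
    simp [e, b, Module.Basis.equivFun_symm_apply, Module.Basis.unitsSMul_apply, Finset.sum_apply,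
      Pi.single_apply, mul_comm]
  have : Countable (Submodule.span ℤ (Set.range b)).toAddSubgroup := Countable.of_equiv _ e
  refine ⟨ZSpan.fundamentalDomain b, fun f => ?_⟩
  rw [(ZSpan.isAddFundamentalDomain' b volume).lintegral_eq_tsum'', ← e.tsum_eq]
  congr! with ℓ ω
  rw [Submodule.vadd_def, vadd_eq_add, he, add_comm]
  rfl

section Periodization

variable {ι : Type*} [Finite ι] {μ : Measure (ι → ℝ)} {c : ℝ} {D : Set (ι → ℝ)}
  {h g ψ : (ι → ℝ) → ℝ≥0∞}

lemma lintegral_mul_eq_setLIntegral_mul_tsum_shift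
    (hD : ∀ f : (ι → ℝ) → ℝ≥0∞,
      ∫⁻ ω, f ω ∂μ = ∑' ℓ : ι → ℤ, ∫⁻ ω in D, f (fun s => ω s + c * ℓ s) ∂μ)
    (hh : Measurable h) (hg : Measurable g)
    (hper : ∀ ω (ℓ : ι → ℤ), h (fun s => ω s + c * ℓ s) = h ω) :
    ∫⁻ ω, h ω * g ω ∂μ = ∫⁻ ω in D, h ω * ∑' ℓ : ι → ℤ, g (fun s => ω s + c * ℓ s) ∂μ := by
  simp_rw [hD, hper, ← ENNReal.tsum_mul_left]
  exact (lintegral_tsum fun ℓ => (hh.mul (hg.comp (by fun_prop))).aemeasurable).symm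

theorem lintegral_mul_le_mul_lintegral_of_tsum_shift_le
    (hD : ∀ f : (ι → ℝ) → ℝ≥0∞,
      ∫⁻ ω, f ω ∂μ = ∑' ℓ : ι → ℤ, ∫⁻ ω in D, f (fun s => ω s + c * ℓ s) ∂μ)
    (hh : Measurable h) (hg : Measurable g) (hψ : Measurable ψ)
    (hper : ∀ ω (ℓ : ι → ℤ), h (fun s => ω s + c * ℓ s) = h ω) {B : ℝ≥0∞}
    (hgB : ∀ ω : ι → ℝ, ∑' ℓ : ι → ℤ, g (fun s => ω s + c * ℓ s) ≤ B)
    (hψ1 : ∀ᵐ ω ∂μ, ∑' ℓ : ι → ℤ, ψ (fun s => ω s + c * ℓ s) = 1) :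
    ∫⁻ ω, h ω * g ω ∂μ ≤ B * ∫⁻ ω, h ω * ψ ω ∂μ := calc
  ∫⁻ ω, h ω * g ω ∂μ = ∫⁻ ω in D, h ω * ∑' ℓ : ι → ℤ, g (fun s => ω s + c * ℓ s) ∂μ :=
    lintegral_mul_eq_setLIntegral_mul_tsum_shift hD hh hg hper
  _ ≤ ∫⁻ ω in D, h ω * B ∂μ := lintegral_mono fun ω => by gcongr; exact hgB ω
  _ = B * ∫⁻ ω in D, h ω * ∑' ℓ : ι → ℤ, ψ (fun s => ω s + c * ℓ s) ∂μ := by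
    rw [lintegral_mul_const _ hh, mul_comm]
    congr 1
    refine lintegral_congr_ae (ae_restrict_of_ae ?_)
    filter_upwards [hψ1] with ω hω
    rw [hω, mul_one]
  _ = B * ∫⁻ ω, h ω * ψ ω ∂μ := by
    rw [lintegral_mul_eq_setLIntegral_mul_tsum_shift hD hh hψ hper]

end Periodization

theorem integral_le_toReal_mul_integral_of_lintegral_le_s6 {α : Type*} [MeasurableSpace α]
    {μ : Measure α} {F G : α → ℝ} {B : ℝ≥0∞} (hF : 0 ≤ᵐ[μ] F)
    (hFm : AEStronglyMeasurable F μ) (hG : 0 ≤ᵐ[μ] G) (hGi : Integrable G μ) (hB : B ≠ ∞)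
    (hFG : ∫⁻ x, ENNReal.ofReal (F x) ∂μ ≤ B * ∫⁻ x, ENNReal.ofReal (G x) ∂μ) :
    ∫ x, F x ∂μ ≤ B.toReal * ∫ x, G x ∂μ := by
  rw [integral_eq_lintegral_of_nonneg_ae hF hFm, integral_eq_lintegral_of_nonneg_ae hG hGi.1,
    ← ENNReal.toReal_mul]
  exact ENNReal.toReal_mono (ENNReal.mul_ne_top hB hGi.lintegral_lt_top.ne) hFG

theorem bernstein_inequality_shift_invariant_multidim_general
    (n : ℕ)
    (φhat : (Fin n → ℝ) → ℂ) (hφmeas : Measurable φhat)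
    (horth : ∀ᵐ ω : Fin n → ℝ,
      ∑' ℓ : Fin n → ℤ, ‖φhat (fun s => ω s + 2 * π * ℓ s)‖ ^ 2 = 1)
    (k : Fin n → ℕ)
    (hfin : (⨆ ω : Fin n → ℝ, ∑' ℓ : Fin n → ℤ,
        ENNReal.ofReal ((∏ s, |ω s + 2 * π * ℓ s| ^ (2 * k s)) *
          ‖φhat (fun s => ω s + 2 * π * ℓ s)‖ ^ 2)) ≠ ⊤)
    (m : (Fin n → ℝ) → ℂ) (hmmeas : Measurable m)
    -- `m` is `2π`-periodic in each variable
    (hmper : ∀ (ω : Fin n → ℝ) (ℓ : Fin n → ℤ), m (fun s => ω s + 2 * π * ℓ s) = m ω)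
    -- `f ∈ L²(ℝⁿ)` (on the Fourier side, via Plancherel)
    (hfL2 : MemLp (fun ω => m ω * φhat ω) 2 volume) :
    (1 / (2 * π) ^ n) * ∫ ω : Fin n → ℝ, (∏ s, |ω s| ^ (2 * k s)) * ‖m ω * φhat ω‖ ^ 2 ≤
      (⨆ ω : Fin n → ℝ, ∑' ℓ : Fin n → ℤ,
        ENNReal.ofReal ((∏ s, |ω s + 2 * π * ℓ s| ^ (2 * k s)) *
          ‖φhat (fun s => ω s + 2 * π * ℓ s)‖ ^ 2)).toReal *
      ((1 / (2 * π) ^ n) * ∫ ω : Fin n → ℝ, ‖m ω * φhat ω‖ ^ 2) := by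
  obtain ⟨D, hD⟩ := exists_lintegral_eq_tsum_setLIntegral_shift (ι := Fin n) (c := 2 * π)
    (by positivity)
  have hψ1 : ∀ᵐ ω : Fin n → ℝ,
      ∑' ℓ : Fin n → ℤ, ENNReal.ofReal (‖φhat (fun s => ω s + 2 * π * ℓ s)‖ ^ 2) = 1 := by
    filter_upwards [horth] with ω hω
    have hsum : Summable fun ℓ : Fin n → ℤ => ‖φhat (fun s => ω s + 2 * π * ℓ s)‖ ^ 2 := by
      by_contra h
      simp [tsum_eq_zero_of_not_summable h] at hω
    rw [← ENNReal.ofReal_tsum_of_nonneg (fun _ => by positivity) hsum, hω, ENNReal.ofReal_one]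
  rw [mul_left_comm]
  gcongr
  refine integral_le_toReal_mul_integral_of_lintegral_le_s6 (.of_forall fun _ => by positivity)
    (by fun_prop) (.of_forall fun _ => by positivity) (hfL2.integrable_norm_pow two_ne_zero) hfin ?_
  simp_rw [norm_mul, mul_pow, mul_left_comm _ (‖m _‖ ^ 2), ENNReal.ofReal_mul (sq_nonneg _)]
  exact lintegral_mul_le_mul_lintegral_of_tsum_shift_le hD (by fun_prop) (by fun_prop)
    (by fun_prop) (fun ω ℓ => by simp only [hmper]) (fun ω => le_iSup_of_le ω le_rfl) hψ1

/-- **Multidimensional Bernstein-type inequality in shift-invariant subspaces of `L²(ℝⁿ)`**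
(Babenko–Ligun–Spektor, Theorem 3, inequality part).

We work on the Fourier side: `φhat : (Fin n → ℝ) → ℂ` is the Fourier transform of
`φ ∈ L²(ℝⁿ)` whose integer translates are orthonormal, i.e.
`∑_{ℓ∈ℤⁿ} |φhat(ω+2πℓ)|² = 1` a.e.  An element `f` of the shift-invariant space `Wⁿ`
generated by these translates has `f̂(ω) = m(ω)·φhat(ω)` with `m` `2π`-periodic in each
variable and square integrable over `[0,2π]ⁿ`.  By Plancherel,
`‖f‖₂² = (2π)⁻ⁿ ∫_{ℝⁿ} ‖f̂(ω)‖² dω` and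
`‖∂^{|k|}f/∂x₁^{k₁}⋯∂x_n^{k_n}‖₂² = (2π)⁻ⁿ ∫_{ℝⁿ} ∏_s |ω_s|^{2k_s} ‖f̂(ω)‖² dω`.

If `sup_ω ∑_{ℓ∈ℤⁿ} ∏_s |ω_s+2πℓ_s|^{2k_s} |φhat(ω+2πℓ)|² < ∞`, then for every `f ∈ Wⁿ`
whose mixed weak derivative `∂^{|k|}f/∂x₁^{k₁}⋯∂x_n^{k_n}` is in `L²(ℝⁿ)`,
`‖∂^{|k|}f/∂x₁^{k₁}⋯∂x_n^{k_n}‖₂² ≤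
  (sup_ω ∑_{ℓ∈ℤⁿ} ∏_s |ω_s+2πℓ_s|^{2k_s} |φhat(ω+2πℓ)|²) · ‖f‖₂²`. -/
theorem bernstein_inequality_shift_invariant_multidim
    (n : ℕ) (hn : 1 ≤ n)
    (φhat : (Fin n → ℝ) → ℂ) (hφmeas : Measurable φhat)
    (hφL2 : MemLp φhat 2 volume)
    (horth : ∀ᵐ ω : Fin n → ℝ,
      ∑' ℓ : Fin n → ℤ, ‖φhat (fun s => ω s + 2 * π * ℓ s)‖ ^ 2 = 1)
    (k : Fin n → ℕ) (hk : ∀ s, 0 < k s)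
    (hfin : (⨆ ω : Fin n → ℝ, ∑' ℓ : Fin n → ℤ,
        ENNReal.ofReal ((∏ s, |ω s + 2 * π * ℓ s| ^ (2 * k s)) *
          ‖φhat (fun s => ω s + 2 * π * ℓ s)‖ ^ 2)) ≠ ⊤)
    (m : (Fin n → ℝ) → ℂ) (hmmeas : Measurable m)
    -- `m` is `2π`-periodic in each variable
    (hmper : ∀ (ω : Fin n → ℝ) (ℓ : Fin n → ℤ), m (fun s => ω s + 2 * π * ℓ s) = m ω)
    (hmL2 : IntegrableOn (fun ω => ‖m ω‖ ^ 2)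
      (Set.univ.pi fun _ : Fin n => Set.Ioc (0 : ℝ) (2 * π)) volume)
    -- `f ∈ L²(ℝⁿ)` (on the Fourier side, via Plancherel)
    (hfL2 : MemLp (fun ω => m ω * φhat ω) 2 volume)
    -- the mixed weak derivative is in `L²(ℝⁿ)` (on the Fourier side, via Plancherel)
    (hfkL2 : Integrable
      (fun ω : Fin n → ℝ => (∏ s, |ω s| ^ (2 * k s)) * ‖m ω * φhat ω‖ ^ 2) volume) :
    (1 / (2 * π) ^ n) * ∫ ω : Fin n → ℝ, (∏ s, |ω s| ^ (2 * k s)) * ‖m ω * φhat ω‖ ^ 2 ≤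
      (⨆ ω : Fin n → ℝ, ∑' ℓ : Fin n → ℤ,
        ENNReal.ofReal ((∏ s, |ω s + 2 * π * ℓ s| ^ (2 * k s)) *
          ‖φhat (fun s => ω s + 2 * π * ℓ s)‖ ^ 2)).toReal *
      ((1 / (2 * π) ^ n) * ∫ ω : Fin n → ℝ, ‖m ω * φhat ω‖ ^ 2) :=
  bernstein_inequality_shift_invariant_multidim_general n φhat hφmeas horth k hfin m hmmeas hmper
    hfL2
end
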